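/- Let H = (H0, H1) be a consistent partial condition over a nonempty finite set T in which every member of H0 ∪ H1 is nonempty, and assume T ∈ H0 ∪ H1, say T has classification σ0 ∈ {0,1} (σ0 = 0 if T ∈ H0, σ0 = 1 if T ∈ H1). Suppose Z0 ⊇ Z1 ⊇ ⋯ ⊇ Z_{n-1} is a chain of subsets of T with classifications σi alternating (σ_{i+1} = 1 − σi) such that Z0 = T, for each 1 ≤ i ≤ n−1 the set Zi equals the union of all X ∈ H_{σi} with X ⊆ Z_{i-1} and Zi ≠ Z_{i-1}, and there is no X ∈ H_{1−σ_{n-1}} with X ⊆ Z_{n-1}. Then the parity condition κ : T → ℕ defined by κ(t) = σ0 + max{i : t ∈ Zi} is consistent with H. -/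
import Mathlib


/-- The component of a partial condition `(H0, H1)` corresponding to a
classification `σ ∈ {0, 1}`. -/
def Hcomp {T : Type*} (H0 H1 : Set (Set T)) : ℕ → Set (Set T) :=
  fun s => if s = 0 then H0 else H1

open Classical in
/-- Correctness of the parity condition extracted from a Zielonka
path.  Given a consistent partial condition `(H0, H1)` over a nonempty finite
set `T` (all members nonempty, `T` classified, with classification `σ 0`),
and a chain `Z 0 ⊇ Z 1 ⊇ ⋯ ⊇ Z (n-1)` with alternating classifications,
`Z 0 = T`, each `Z (i+1)` being the union of all `X ∈ H_{σ (i+1)}` contained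
in `Z i` and different from `Z i`, and no `X ∈ H_{1 - σ (n-1)}` contained in
`Z (n-1)`, the parity condition `κ t = σ 0 + max {i : t ∈ Z i}` is consistent
with `(H0, H1)`. -/
theorem parityCons_zielonka_correct {T : Type*} [Fintype T] [Nonempty T]
    (H0 H1 : Set (Set T)) (hcons : H0 ∩ H1 = ∅)
    (hne : ∀ X ∈ H0 ∪ H1, X.Nonempty)
    (hT : Set.univ ∈ H0 ∪ H1)
    (n : ℕ) (hn : 1 ≤ n) (Z : ℕ → Set T) (σ : ℕ → ℕ)
    (hσ0 : σ 0 = if Set.univ ∈ H0 then 0 else 1)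
    (hσbound : ∀ i, i < n → σ i ≤ 1)
    (hσalt : ∀ i, i + 1 < n → σ (i + 1) = 1 - σ i)
    (hZ0 : Z 0 = Set.univ)
    (hchain : ∀ i, i + 1 < n →
      Z (i + 1) = ⋃₀ {X | X ∈ Hcomp H0 H1 (σ (i + 1)) ∧ X ⊆ Z i} ∧
      Z (i + 1) ≠ Z i)
    (hlast : ¬∃ X ∈ Hcomp H0 H1 (1 - σ (n - 1)), X ⊆ Z (n - 1)) :
    (∀ X ∈ H0,
        Even (sInf ((fun t => σ 0 + sSup {i | i < n ∧ t ∈ Z i}) '' X))) ∧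
    ∀ X ∈ H1,
        ¬Even (sInf ((fun t => σ 0 + sSup {i | i < n ∧ t ∈ Z i}) '' X)) := by
  classical
  set m : T → ℕ := fun t => sSup {i | i < n ∧ t ∈ Z i} with hm
  -- one-step monotonicity of the chain
  have hsub : ∀ i, i + 1 < n → Z (i + 1) ⊆ Z i := by
    intro i hi
    rw [(hchain i hi).1]
    rintro t ⟨X, ⟨-, hXZ⟩, htX⟩
    exact hXZ htX
  -- full monotonicity
  have hmono : ∀ i j, i ≤ j → j < n → Z j ⊆ Z i := by
    intro i j hij hj
    induction j with
    | zero =>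
      have : i = 0 := Nat.le_zero.mp hij
      simp [this]
    | succ k ih =>
      rcases Nat.eq_or_lt_of_le hij with h | h
      · rw [h]
      · exact (hsub k hj).trans (ih (Nat.lt_succ_iff.mp h) (Nat.lt_of_succ_lt hj))
  -- basic facts about m
  have hSne : ∀ t : T, (0 : ℕ) ∈ {i | i < n ∧ t ∈ Z i} := by
    intro t
    exact ⟨hn, by rw [hZ0]; trivial⟩
  have hSbdd : ∀ t : T, BddAbove {i | i < n ∧ t ∈ Z i} := by
    intro t
    exact ⟨n, fun i hi => le_of_lt hi.1⟩
  have hm_mem : ∀ t : T, m t < n ∧ t ∈ Z (m t) := by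
    intro t
    exact Nat.sSup_mem ⟨0, hSne t⟩ (hSbdd t)
  have hm_le : ∀ (t : T) (i : ℕ), i < n → t ∈ Z i → i ≤ m t := by
    intro t i hi hti
    exact le_csSup (hSbdd t) ⟨hi, hti⟩
  have hmem_of_le : ∀ (t : T) (i : ℕ), i ≤ m t → t ∈ Z i := by
    intro t i hi
    exact hmono i (m t) hi (hm_mem t).1 (hm_mem t).2
  -- key structural lemma
  have key : ∀ τ, τ ≤ 1 → ∀ X, X ∈ Hcomp H0 H1 τ → X.Nonempty →
      ∃ t0 ∈ X, (∀ t ∈ X, m t0 ≤ m t) ∧ σ (m t0) = τ := by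
    intro τ hτ X hX hXne
    have himne : (m '' X).Nonempty := hXne.image m
    obtain ⟨t0, ht0X, ht0⟩ : ∃ t0 ∈ X, m t0 = sInf (m '' X) :=
      Nat.sInf_mem himne
    have hminim : ∀ t ∈ X, m t0 ≤ m t := by
      intro t ht
      rw [ht0]
      exact Nat.sInf_le ⟨t, ht, rfl⟩
    refine ⟨t0, ht0X, hminim, ?_⟩
    have hXsub : X ⊆ Z (m t0) := by
      intro t ht
      exact hmem_of_le t (m t0) (hminim t ht)
    have hmlt : m t0 < n := (hm_mem t0).1
    by_contra hne'
    rcases Nat.lt_or_ge (m t0 + 1) n with hlt | hge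
    · -- m t0 + 1 < n : X would be inside Z (m t0 + 1)
      have hs := hσalt (m t0) hlt
      have hb := hσbound (m t0) hmlt
      have : τ = σ (m t0 + 1) := by omega
      have hXin : X ∈ Hcomp H0 H1 (σ (m t0 + 1)) := this ▸ hX
      have ht0in : t0 ∈ Z (m t0 + 1) := by
        rw [(hchain (m t0) hlt).1]
        exact ⟨X, ⟨hXin, hXsub⟩, ht0X⟩
      have := hm_le t0 (m t0 + 1) hlt ht0in
      omega
    · -- m t0 = n - 1 : contradiction with hlast
      have hmeq : m t0 = n - 1 := by omega
      have hb := hσbound (m t0) hmlt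
      have : τ = 1 - σ (n - 1) := by rw [← hmeq]; omega
      exact hlast ⟨X, this ▸ hX, hmeq ▸ hXsub⟩
  -- parity lemma
  have hpar : ∀ i, i < n → (Even (σ 0 + i) ↔ σ i = 0) := by
    intro i
    induction i with
    | zero =>
      intro h
      have := hσbound 0 h
      rw [Nat.even_iff]
      omega
    | succ k ih =>
      intro h
      have hk := ih (Nat.lt_of_succ_lt h)
      have hs := hσalt k h
      have hb := hσbound k (Nat.lt_of_succ_lt h)
      rw [Nat.even_iff] at hk ⊢
      omega
  -- evaluate sInf of the image
  have hval : ∀ X : Set T, ∀ t0 ∈ X, (∀ t ∈ X, m t0 ≤ m t) →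
      sInf ((fun t => σ 0 + m t) '' X) = σ 0 + m t0 := by
    intro X t0 ht0 hmin
    apply le_antisymm
    · exact Nat.sInf_le ⟨t0, ht0, rfl⟩
    · refine le_csInf ⟨σ 0 + m t0, ⟨t0, ht0, rfl⟩⟩ ?_
      rintro _ ⟨t, ht, rfl⟩
      exact Nat.add_le_add_left (hmin t ht) _
  constructor
  · intro X hX
    obtain ⟨t0, ht0X, hmin, hσ⟩ :=
      key 0 (by norm_num) X (by simpa [Hcomp] using hX) (hne X (Or.inl hX))
    rw [hval X t0 ht0X hmin]
    exact (hpar (m t0) (hm_mem t0).1).mpr hσ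
  · intro X hX
    obtain ⟨t0, ht0X, hmin, hσ⟩ :=
      key 1 le_rfl X (by simpa [Hcomp] using hX) (hne X (Or.inr hX))
    rw [hval X t0 ht0X hmin]
    intro hEv
    have := (hpar (m t0) (hm_mem t0).1).mp hEv
    omega
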